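/- Let f̂, ĝ: Ω ⊆ ℝ → I(ℝ) be gH-differentiable at x with f̲, f̅, g̲, g̅ differentiable at x, f̂ being μ-increasing near x and ĝ being μ-decreasing near x. Then (f̂ ⊕ ĝ)'(x) = f̂'(x) ⊖_gH ((−1)·ĝ'(x)), i.e., the gH-derivative of the Minkowski sum equals the gH-difference of f̂'(x) and the negation of ĝ'(x). -/

import Mathlib

/-!
The gH-difference quotient of an interval function is the interval spanned by the difference
quotients of its endpoints, so with differentiable endpoints its gH-derivative is the interval
spanned by the endpoint derivatives. μ-monotonicity fixes their order: the spread has a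
derivative of constant sign, so `f̲' ≤ f̅'` and `g̅' ≤ g̲'`. Hence `f̂'(x) = [f̲', f̅']`,
`ĝ'(x) = [g̅', g̲']`, and both `(f̂ ⊕ ĝ)'(x)` and `f̂'(x) ⊖_gH ((−1)·ĝ'(x))` are the interval
spanned by `f̲' + g̲'` and `f̅' + g̅'`.
-/

open Filter Topology

section

variable {𝕜 : Type*} [NontriviallyNormedField 𝕜] {f : 𝕜 → 𝕜} {f' x : 𝕜}

theorem HasDerivAt.tendsto_sub_div (hf : HasDerivAt f f' x) :
    Tendsto (fun h => (f (x + h) - f x) / h) (𝓝[≠] 0) (𝓝 f') := by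
  simpa [div_eq_inv_mul] using hf.tendsto_slope_zero

variable [LinearOrder 𝕜] [IsStrictOrderedRing 𝕜] [OrderTopology 𝕜] {U : Set 𝕜}

theorem HasDerivAt.nonneg_of_monotoneOn_of_mem_nhds (hf : HasDerivAt f f' x) (hU : U ∈ 𝓝 x)
    (hmono : MonotoneOn f U) : 0 ≤ f' :=
  hf.hasDerivWithinAt.nonneg_of_monotoneOn
    (((PerfectSpace.univ_preperfect x trivial).nhds_inter hU).mono
      (principal_mono.2 Set.inter_subset_left)) hmono

theorem HasDerivAt.nonpos_of_antitoneOn_of_mem_nhds (hf : HasDerivAt f f' x) (hU : U ∈ 𝓝 x)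
    (hanti : AntitoneOn f U) : f' ≤ 0 :=
  neg_nonneg.1 (hf.neg.nonneg_of_monotoneOn_of_mem_nhds hU hanti.neg)

end

theorem gH_deriv_add_differently_monotonic_general
    (flo fhi glo ghi : ℝ → ℝ)
    (x : ℝ) (U : Set ℝ) (hU : U ∈ nhds x)
    (hfmono : MonotoneOn (fun t => fhi t - flo t) U)
    (hgmono : AntitoneOn (fun t => ghi t - glo t) U)
    (dflo dfhi dglo dghi Flo Fhi Glo Ghi : ℝ)
    (hdflo : HasDerivAt flo dflo x) (hdfhi : HasDerivAt fhi dfhi x)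
    (hdglo : HasDerivAt glo dglo x) (hdghi : HasDerivAt ghi dghi x)
    (hF : Tendsto (fun h : ℝ =>
          min ((flo (x + h) - flo x) / h) ((fhi (x + h) - fhi x) / h))
        (nhdsWithin 0 {(0:ℝ)}ᶜ) (nhds Flo) ∧
      Tendsto (fun h : ℝ =>
          max ((flo (x + h) - flo x) / h) ((fhi (x + h) - fhi x) / h))
        (nhdsWithin 0 {(0:ℝ)}ᶜ) (nhds Fhi))
    (hG : Tendsto (fun h : ℝ =>
          min ((glo (x + h) - glo x) / h) ((ghi (x + h) - ghi x) / h))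
        (nhdsWithin 0 {(0:ℝ)}ᶜ) (nhds Glo) ∧
      Tendsto (fun h : ℝ =>
          max ((glo (x + h) - glo x) / h) ((ghi (x + h) - ghi x) / h))
        (nhdsWithin 0 {(0:ℝ)}ᶜ) (nhds Ghi)) :
    Tendsto (fun h : ℝ =>
        min (((flo (x + h) + glo (x + h)) - (flo x + glo x)) / h)
            (((fhi (x + h) + ghi (x + h)) - (fhi x + ghi x)) / h))
      (nhdsWithin 0 {(0:ℝ)}ᶜ) (nhds (min (Flo - (-Ghi)) (Fhi - (-Glo)))) ∧
    Tendsto (fun h : ℝ =>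
        max (((flo (x + h) + glo (x + h)) - (flo x + glo x)) / h)
            (((fhi (x + h) + ghi (x + h)) - (fhi x + ghi x)) / h))
      (nhdsWithin 0 {(0:ℝ)}ᶜ) (nhds (max (Flo - (-Ghi)) (Fhi - (-Glo)))) := by
  have hflo := hdflo.tendsto_sub_div
  have hfhi := hdfhi.tendsto_sub_div
  have hglo := hdglo.tendsto_sub_div
  have hghi := hdghi.tendsto_sub_div
  obtain rfl : Flo = min dflo dfhi := tendsto_nhds_unique hF.1 (hflo.min hfhi)
  obtain rfl : Fhi = max dflo dfhi := tendsto_nhds_unique hF.2 (hflo.max hfhi)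
  obtain rfl : Glo = min dglo dghi := tendsto_nhds_unique hG.1 (hglo.min hghi)
  obtain rfl : Ghi = max dglo dghi := tendsto_nhds_unique hG.2 (hglo.max hghi)
  have hf_le : dflo ≤ dfhi :=
    sub_nonneg.1 ((hdfhi.sub hdflo).nonneg_of_monotoneOn_of_mem_nhds hU hfmono)
  have hg_le : dghi ≤ dglo :=
    sub_nonpos.1 ((hdghi.sub hdglo).nonpos_of_antitoneOn_of_mem_nhds hU hgmono)
  have hsum_lo := (hdflo.add hdglo).tendsto_sub_div
  have hsum_hi := (hdfhi.add hdghi).tendsto_sub_div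
  rw [min_eq_left hf_le, max_eq_right hf_le, min_eq_right hg_le, max_eq_left hg_le,
    sub_neg_eq_add, sub_neg_eq_add]
  exact ⟨hsum_lo.min hsum_hi, hsum_lo.max hsum_hi⟩

/-- If `f̂` is gH-differentiable at `x` with gH-derivative `[Flo, Fhi]` and μ-increasing
near `x`, `ĝ` is gH-differentiable at `x` with gH-derivative `[Glo, Ghi]` and μ-decreasing
near `x` (endpoint functions differentiable at `x`), then
`(f̂ ⊕ ĝ)'(x) = f̂'(x) ⊖_gH ((−1)·ĝ'(x))`, i.e. the gH-derivative of the Minkowski sum is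
the interval `[min{Flo+Ghi, Fhi+Glo}, max{Flo+Ghi, Fhi+Glo}]`
(`(−1)·[Glo,Ghi] = [−Ghi,−Glo]` and `[Flo,Fhi] ⊖_gH [−Ghi,−Glo]` computed endpoint-wise). -/
theorem gH_deriv_add_differently_monotonic
    (flo fhi glo ghi : ℝ → ℝ) (hfle : ∀ t, flo t ≤ fhi t) (hgle : ∀ t, glo t ≤ ghi t)
    (x : ℝ) (U : Set ℝ) (hU : U ∈ nhds x)
    (hfmono : MonotoneOn (fun t => fhi t - flo t) U)
    (hgmono : AntitoneOn (fun t => ghi t - glo t) U)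
    (dflo dfhi dglo dghi Flo Fhi Glo Ghi : ℝ)
    (hdflo : HasDerivAt flo dflo x) (hdfhi : HasDerivAt fhi dfhi x)
    (hdglo : HasDerivAt glo dglo x) (hdghi : HasDerivAt ghi dghi x)
    (hF : Tendsto (fun h : ℝ =>
          min ((flo (x + h) - flo x) / h) ((fhi (x + h) - fhi x) / h))
        (nhdsWithin 0 {(0:ℝ)}ᶜ) (nhds Flo) ∧
      Tendsto (fun h : ℝ =>
          max ((flo (x + h) - flo x) / h) ((fhi (x + h) - fhi x) / h))
        (nhdsWithin 0 {(0:ℝ)}ᶜ) (nhds Fhi))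
    (hG : Tendsto (fun h : ℝ =>
          min ((glo (x + h) - glo x) / h) ((ghi (x + h) - ghi x) / h))
        (nhdsWithin 0 {(0:ℝ)}ᶜ) (nhds Glo) ∧
      Tendsto (fun h : ℝ =>
          max ((glo (x + h) - glo x) / h) ((ghi (x + h) - ghi x) / h))
        (nhdsWithin 0 {(0:ℝ)}ᶜ) (nhds Ghi)) :
    Tendsto (fun h : ℝ =>
        min (((flo (x + h) + glo (x + h)) - (flo x + glo x)) / h)
            (((fhi (x + h) + ghi (x + h)) - (fhi x + ghi x)) / h))
      (nhdsWithin 0 {(0:ℝ)}ᶜ) (nhds (min (Flo - (-Ghi)) (Fhi - (-Glo)))) ∧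
    Tendsto (fun h : ℝ =>
        max (((flo (x + h) + glo (x + h)) - (flo x + glo x)) / h)
            (((fhi (x + h) + ghi (x + h)) - (fhi x + ghi x)) / h))
      (nhdsWithin 0 {(0:ℝ)}ᶜ) (nhds (max (Flo - (-Ghi)) (Fhi - (-Glo)))) :=
  gH_deriv_add_differently_monotonic_general flo fhi glo ghi x U hU hfmono hgmono dflo dfhi dglo
    dghi Flo Fhi Glo Ghi hdflo hdfhi hdglo hdghi hF hG
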